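/- arXiv:1212.1029 — 2 statements merged into one kernel-verified Lean document; each statement's English description precedes it below -/
import Mathlib

section
/- Let G be a connected graph with maximum degree Δ ≥ 3 and γ ≥ 2, and let M = Δ·((Δ-1)^γ - 1)/(Δ-2). For any edge uv of G, the graph G^γ with both vertices u and v removed has chromatic number at most M-1. -/
/-- The γ-th power of a graph: two vertices are adjacent iff their distance in G is at most γ. -/
def SimpleGraph.power {V : Type*} (G : SimpleGraph V) (γ : ℕ) : SimpleGraph V where
  Adj u v := u ≠ v ∧ G.Reachable u v ∧ G.dist u v ≤ γ
  symm := ⟨fun u v => by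
    rintro ⟨h1, h2, h3⟩
    exact ⟨h1.symm, h2.symm, by rwa [SimpleGraph.dist_comm]⟩⟩
  loopless := ⟨fun v => by simp⟩

noncomputable instance {V : Type*} (G : SimpleGraph V) (γ : ℕ) :
    DecidableRel (G.power γ).Adj := Classical.decRel _

/-!
Colour `G^γ - {u, v}` greedily, taking the vertices in order of decreasing distance from `u`.
When `w` is coloured, its coloured neighbours lie in the punctured `γ`-ball around `w`, which by
the Moore bound has at most `M = Δ ∑_{k<γ} (Δ-1)^k` vertices. Two of these are never coloured
before `w`: `u` and `v` if `w` is adjacent to `u`, and otherwise the next two vertices on a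
shortest path from `w` to `u`, which lie within distance `2 ≤ γ` of `w` and are closer to `u`.
So at most `M - 2` colours are blocked, and `M - 1` colours suffice.
-/

open Finset

theorem Nat.mul_geomSum_eq {q : ℕ} (hq : 2 ≤ q) (m n : ℕ) :
    m * ∑ k ∈ range n, q ^ k = m * (q ^ n - 1) / (q - 1) := by
  rw [Nat.geomSum_eq hq, Nat.mul_div_assoc _ (Nat.sub_one_dvd_pow_sub_one q n)]

namespace SimpleGraph

variable {V : Type*} {G : SimpleGraph V}

theorem colorable_induce_of_forall_card_le [DecidableEq V] [DecidableRel G.Adj] {β : Type*}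
    [LinearOrder β] (f : V → β) (k : ℕ) (s : Finset V)
    (h : ∀ w ∈ s, #{x ∈ s | G.Adj w x ∧ f w ≤ f x} ≤ k) :
    (G.induce (s : Set V)).Colorable (k + 1) := by
  suffices ∃ c : V → Fin (k + 1), ∀ a ∈ s, ∀ b ∈ s, G.Adj a b → c a ≠ c b by
    obtain ⟨c, hc⟩ := this
    exact ⟨Coloring.mk (fun x => c x) fun {x y} hxy => hc x x.2 y y.2 hxy⟩
  induction s using Finset.induction_on_min_value f with
  | empty => exact ⟨0, by simp⟩
  | insert a s ha hmin ih =>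
    obtain ⟨c, hc⟩ := ih fun w hw =>
      (card_le_card (filter_subset_filter _ (subset_insert a s))).trans (h w (mem_insert_of_mem hw))
    have hnbrs : #((s.filter (G.Adj a)).image c) < #(univ : Finset (Fin (k + 1))) := by
      rw [card_univ, Fintype.card_fin, Nat.lt_succ_iff]
      refine card_image_le.trans ((card_le_card fun x hx => ?_).trans (h a (mem_insert_self a s)))
      rw [mem_filter] at hx ⊢
      exact ⟨mem_insert_of_mem hx.1, hx.2, hmin x hx.1⟩
    obtain ⟨col, -, hcol⟩ := exists_mem_notMem_of_card_lt_card hnbrs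
    refine ⟨Function.update c a col, ?_⟩
    have hfree : ∀ x ∈ s, G.Adj a x → c x ≠ col := fun x hx hax hxc =>
      hcol (mem_image.2 ⟨x, mem_filter.2 ⟨hx, hax⟩, hxc⟩)
    have hne : ∀ x ∈ s, x ≠ a := fun x hx hxa => ha (hxa ▸ hx)
    intro x hx y hy hxy
    rcases mem_insert.1 hx with rfl | hxs <;> rcases mem_insert.1 hy with rfl | hys
    · exact (G.irrefl hxy).elim
    · simpa [hne y hys] using (hfree y hys hxy).symm
    · simpa [hne x hxs] using hfree x hxs hxy.symm
    · simpa [hne x hxs, hne y hys] using hc x hxs y hys hxy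

theorem exists_adj_dist_add_one_eq {u w : V} (h : G.dist u w ≠ 0) :
    ∃ x, G.Adj x w ∧ G.dist u x + 1 = G.dist u w := by
  obtain ⟨p, hp⟩ := exists_walk_of_dist_ne_zero h
  have hnil : ¬p.Nil := fun hnil => h (hp ▸ hnil.length_eq_zero)
  have hadj := p.adj_penultimate hnil
  refine ⟨p.penultimate, hadj, le_antisymm ?_ ?_⟩
  · have := dist_le p.dropLast
    rw [p.length_dropLast] at this
    omega
  · have := hadj.reachable.dist_triangle_right u
    rwa [dist_eq_one_iff_adj.2 hadj] at this

section MooreBound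

variable [Fintype V] [DecidableEq V] [DecidableRel G.Adj]

theorem card_filter_dist_eq_add_one_le (w : V) (k : ℕ) :
    #{x | G.dist w x = k + 1} ≤ G.maxDegree * (G.maxDegree - 1) ^ k := by
  induction k with
  | zero =>
    simpa using (card_le_card fun x hx => by simpa using hx).trans (G.degree_le_maxDegree w)
  | succ k ih =>
    have hcover : ({x | G.dist w x = k + 2} : Finset V) ⊆
        ({y | G.dist w y = k + 1} : Finset V).biUnion
          fun y => {x ∈ G.neighborFinset y | G.dist w x = k + 2} := by
      intro x hx
      simp only [mem_filter, mem_univ, true_and] at hx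
      obtain ⟨y, hyx, hy⟩ := exists_adj_dist_add_one_eq (show G.dist w x ≠ 0 by omega)
      simp only [mem_biUnion, mem_filter, mem_univ, mem_neighborFinset, true_and]
      exact ⟨y, by omega, hyx, hx⟩
    have hfiber : ∀ y ∈ ({y | G.dist w y = k + 1} : Finset V),
        #{x ∈ G.neighborFinset y | G.dist w x = k + 2} ≤ G.maxDegree - 1 := by
      intro y hy
      simp only [mem_filter, mem_univ, true_and] at hy
      obtain ⟨z, hzy, hz⟩ := exists_adj_dist_add_one_eq (show G.dist w y ≠ 0 by omega)
      calc #{x ∈ G.neighborFinset y | G.dist w x = k + 2}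
          ≤ #((G.neighborFinset y).erase z) := card_le_card fun x hx => by
            rw [mem_filter] at hx
            exact mem_erase.2 ⟨by rintro rfl; omega, hx.1⟩
        _ = G.degree y - 1 := card_erase_of_mem (by simpa using hzy.symm)
        _ ≤ G.maxDegree - 1 := Nat.sub_le_sub_right (G.degree_le_maxDegree y) 1
    calc #{x | G.dist w x = k + 1 + 1}
        ≤ ∑ y ∈ ({y | G.dist w y = k + 1} : Finset V),
            #{x ∈ G.neighborFinset y | G.dist w x = k + 2} :=
          (card_le_card hcover).trans card_biUnion_le
      _ ≤ #{y | G.dist w y = k + 1} * (G.maxDegree - 1) := sum_le_card_nsmul _ _ _ hfiber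
      _ ≤ G.maxDegree * (G.maxDegree - 1) ^ k * (G.maxDegree - 1) := Nat.mul_le_mul_right _ ih
      _ = G.maxDegree * (G.maxDegree - 1) ^ (k + 1) := by ring

theorem card_filter_dist_mem_Icc_le (w : V) (r : ℕ) :
    #{x | G.dist w x ∈ Icc 1 r} ≤ G.maxDegree * ∑ k ∈ range r, (G.maxDegree - 1) ^ k := by
  calc #{x | G.dist w x ∈ Icc 1 r}
      ≤ #((range r).biUnion fun k => ({x | G.dist w x = k + 1} : Finset V)) :=
        card_le_card fun x hx => by
          simp only [mem_filter, mem_Icc, mem_univ, true_and] at hx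
          simp only [mem_biUnion, mem_filter, mem_range, mem_univ, true_and]
          exact ⟨G.dist w x - 1, by omega, by omega⟩
    _ ≤ ∑ k ∈ range r, #{x | G.dist w x = k + 1} := card_biUnion_le
    _ ≤ ∑ k ∈ range r, G.maxDegree * (G.maxDegree - 1) ^ k :=
        sum_le_sum fun k _ => card_filter_dist_eq_add_one_le w k
    _ = G.maxDegree * ∑ k ∈ range r, (G.maxDegree - 1) ^ k := (mul_sum ..).symm

end MooreBound

theorem Connected.exists_pair_near_of_adj [DecidableEq V] (hconn : G.Connected) {u v w : V}
    (huv : G.Adj u v) (hwu : w ≠ u) (hwv : w ≠ v) :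
    ∃ a b, a ≠ b ∧ ∀ x ∈ ({a, b} : Finset V),
      G.dist w x ∈ Icc 1 2 ∧ (x = v ∨ G.dist u x < G.dist u w) := by
  have hd : 0 < G.dist u w := hconn.pos_dist_of_ne hwu.symm
  by_cases hadj : G.Adj u w
  · have hwu1 : G.dist w u = 1 := dist_eq_one_iff_adj.2 hadj.symm
    have huv1 : G.dist u v = 1 := dist_eq_one_iff_adj.2 huv
    have hwv2 : G.dist w v ≤ G.dist w u + G.dist u v := hconn.dist_triangle
    have hwv1 : 0 < G.dist w v := hconn.pos_dist_of_ne hwv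
    refine ⟨u, v, huv.ne, ?_⟩
    simp only [mem_insert, mem_singleton, mem_Icc]
    rintro x (rfl | rfl)
    · exact ⟨by omega, Or.inr (by simpa using hd)⟩
    · exact ⟨by omega, Or.inl rfl⟩
  · have hd2 : 1 < G.dist u w := hconn.one_lt_dist_of_ne_of_not_adj hwu.symm hadj
    obtain ⟨a, haw, ha⟩ := exists_adj_dist_add_one_eq hd.ne'
    obtain ⟨b, hba, hb⟩ := exists_adj_dist_add_one_eq (show G.dist u a ≠ 0 by omega)
    have hwa1 : G.dist w a = 1 := dist_eq_one_iff_adj.2 haw.symm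
    have hab1 : G.dist a b = 1 := dist_eq_one_iff_adj.2 hba.symm
    have hwb2 : G.dist w b ≤ G.dist w a + G.dist a b := hconn.dist_triangle
    have hwb1 : 0 < G.dist w b := hconn.pos_dist_of_ne fun hwb => by subst hwb; omega
    refine ⟨a, b, fun hab => by subst hab; omega, ?_⟩
    simp only [mem_insert, mem_singleton, mem_Icc]
    rintro x (rfl | rfl) <;> exact ⟨by omega, Or.inr (by omega)⟩

theorem card_power_adj_le_of_adj [Fintype V] [DecidableEq V] [DecidableRel G.Adj]
    (hconn : G.Connected) {u v : V} (huv : G.Adj u v) {γ : ℕ} (hγ : 2 ≤ γ) {w : V}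
    (hw : w ∈ ({u, v}ᶜ : Finset V)) :
    #{x ∈ ({u, v}ᶜ : Finset V) | (G.power γ).Adj w x ∧ G.dist u w ≤ G.dist u x} ≤
      G.maxDegree * ∑ k ∈ range γ, (G.maxDegree - 1) ^ k - 2 := by
  simp only [mem_compl, mem_insert, mem_singleton, not_or] at hw
  obtain ⟨a, b, hab, hnear⟩ := hconn.exists_pair_near_of_adj huv hw.1 hw.2
  have hpair : {a, b} ⊆ ({x | G.dist w x ∈ Icc 1 γ} : Finset V) := fun x hx => by
    have := mem_Icc.1 (hnear x hx).1
    simp only [mem_filter, mem_univ, mem_Icc, true_and]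
    omega
  have hcount : {x ∈ ({u, v}ᶜ : Finset V) | (G.power γ).Adj w x ∧ G.dist u w ≤ G.dist u x} ⊆
      ({x | G.dist w x ∈ Icc 1 γ} : Finset V) \ {a, b} := by
    intro x hx
    simp only [mem_filter, mem_compl, mem_insert, mem_singleton, not_or] at hx
    obtain ⟨⟨-, hxv⟩, ⟨hwx, hreach, hle⟩, hfar⟩ := hx
    refine mem_sdiff.2 ⟨?_, fun hxab => ?_⟩
    · simpa only [mem_filter, mem_univ, mem_Icc, true_and] using ⟨hreach.pos_dist_of_ne hwx, hle⟩
    · rcases (hnear x hxab).2 with rfl | hnearer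
      · exact hxv rfl
      · omega
  calc _ ≤ #(({x | G.dist w x ∈ Icc 1 γ} : Finset V) \ {a, b}) := card_le_card hcount
    _ = #({x | G.dist w x ∈ Icc 1 γ} : Finset V) - 2 := by
        rw [card_sdiff_of_subset hpair, card_pair hab]
    _ ≤ _ := Nat.sub_le_sub_right (card_filter_dist_mem_Icc_le w γ) 2

end SimpleGraph

open SimpleGraph in
theorem power_delete_edge_chromaticNumber_general {V : Type*} [Fintype V]
    (G : SimpleGraph V) [DecidableRel G.Adj] (hconn : G.Connected) (Δ γ : ℕ)
    (hΔ : G.maxDegree = Δ) (h3 : 3 ≤ Δ) (hγ : 2 ≤ γ)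
    (u v : V) (huv : G.Adj u v) :
    ((G.power γ).induce ({u, v}ᶜ : Set V)).chromaticNumber ≤
      ((Δ * ((Δ - 1) ^ γ - 1) / (Δ - 2) - 1 : ℕ) : ℕ∞) := by
  classical
  subst hΔ
  set M := G.maxDegree * ∑ k ∈ range γ, (G.maxDegree - 1) ^ k with hM
  have hM3 : 3 ≤ M := h3.trans (Nat.le_mul_of_pos_right _
    (sum_pos' (fun _ _ => Nat.zero_le _) ⟨0, mem_range.2 (by omega), by simp⟩))
  have hcol := colorable_induce_of_forall_card_le (G := G.power γ) (G.dist u) (M - 2) {u, v}ᶜ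
    fun w hw => card_power_adj_le_of_adj hconn huv hγ hw
  rw [coe_compl, coe_pair] at hcol
  rw [show G.maxDegree - 2 = G.maxDegree - 1 - 1 by omega, ← Nat.mul_geomSum_eq (by omega),
    ← hM, show M - 1 = M - 2 + 1 by omega]
  exact hcol.chromaticNumber_le

/-- For any edge uv of G, deleting u and v from G^γ leaves a graph with
chromatic number at most M-1. -/
theorem power_delete_edge_chromaticNumber {V : Type*} [Fintype V] [DecidableEq V]
    (G : SimpleGraph V) [DecidableRel G.Adj] (hconn : G.Connected) (Δ γ : ℕ)
    (hΔ : G.maxDegree = Δ) (h3 : 3 ≤ Δ) (hγ : 2 ≤ γ)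
    (u v : V) (huv : G.Adj u v) :
    ((G.power γ).induce ({u, v}ᶜ : Set V)).chromaticNumber ≤
      ((Δ * ((Δ - 1) ^ γ - 1) / (Δ - 2) - 1 : ℕ) : ℕ∞) :=
  power_delete_edge_chromaticNumber_general G hconn Δ γ hΔ h3 hγ u v huv
end

section
/- Let G be a connected graph with maximum degree Δ ≥ 3 and γ ≥ 2 whose minimum degree δ satisfies δ ≤ Δ-1 (i.e., G is not regular). Then χ_γ(G) ≤ M-1, where M = Δ·((Δ-1)^γ - 1)/(Δ-2). -/
open Finset

lemma mul_pow_sub_one_div_eq_mul_geom_sum (a : ℕ) {m : ℕ} (hm : 2 ≤ m) (n : ℕ) :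
    a * (m ^ n - 1) / (m - 1) = a * ∑ i ∈ range n, m ^ i := by
  obtain ⟨x, rfl⟩ : ∃ x, m = x + 1 := ⟨m - 1, by omega⟩
  rw [← geom_sum_mul_add x n, add_tsub_cancel_right, add_tsub_cancel_right, ← mul_assoc,
    Nat.mul_div_cancel _ (by omega)]

lemma exists_injective_lt_of_lt {α : Type*} [Finite α] (f : α → ℕ) :
    ∃ g : α → ℕ, Function.Injective g ∧ ∀ a b, f a < f b → g a < g b := by
  obtain ⟨n, ⟨e⟩⟩ := Finite.exists_equiv_fin α
  have hlt : ∀ a b, f a < f b → f a * n + e a < f b * n + e b := fun a b h => by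
    have := (e a).2
    nlinarith
  refine ⟨fun a => f a * n + e a, fun a b hab => ?_, hlt⟩
  rcases lt_trichotomy (f a) (f b) with h | h | h
  · exact absurd hab (hlt a b h).ne
  · exact e.injective (Fin.ext (by simp only [h] at hab; omega))
  · exact absurd hab (hlt b a h).ne'

namespace SimpleGraph

section Greedy
variable {V : Type*} [Fintype V] (H : SimpleGraph V) [DecidableRel H.Adj] (f : V → ℕ)

def earlierNeighborFinset (v : V) : Finset V := {w ∈ H.neighborFinset v | f w < f v}

variable {H f} in
lemma mem_earlierNeighborFinset {v w : V} :
    w ∈ H.earlierNeighborFinset f v ↔ H.Adj v w ∧ f w < f v := by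
  simp [earlierNeighborFinset]

noncomputable def greedyColor (v : V) : ℕ :=
  Nat.find <| Infinite.exists_notMem_finset <|
    (H.earlierNeighborFinset f v).attach.image fun w => greedyColor w.1
termination_by f v
decreasing_by all_goals exact (mem_earlierNeighborFinset.1 w.2).2

variable {H f}

lemma greedyColor_ne_of_adj_of_lt {v w : V} (hadj : H.Adj v w) (hlt : f w < f v) :
    H.greedyColor f v ≠ H.greedyColor f w := by
  have hw : H.greedyColor f w ∈ (H.earlierNeighborFinset f v).attach.image
      fun w => H.greedyColor f w.1 :=
    mem_image.2 ⟨⟨w, mem_earlierNeighborFinset.2 ⟨hadj, hlt⟩⟩, mem_attach _ _, rfl⟩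
  rw [greedyColor]
  exact fun h => Nat.find_spec (Infinite.exists_notMem_finset _) (h ▸ hw)

lemma greedyColor_le_card (v : V) : H.greedyColor f v ≤ #(H.earlierNeighborFinset f v) := by
  rw [greedyColor]
  obtain ⟨c, hc, hc_notMem⟩ := exists_mem_notMem_of_card_lt_card
    (s := (H.earlierNeighborFinset f v).attach.image fun w => H.greedyColor f w.1)
    (t := range (#(H.earlierNeighborFinset f v) + 1))
    (card_image_le.trans_lt (by simp))
  exact (Nat.find_min' _ hc_notMem).trans (Nat.lt_succ_iff.1 (mem_range.1 hc))

theorem colorable_of_card_earlierNeighborFinset_lt (hf : Function.Injective f) {k : ℕ}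
    (hk : ∀ v, #(H.earlierNeighborFinset f v) < k) : H.Colorable k := by
  refine (colorable_iff_exists_bdd_nat_coloring k).2
    ⟨Coloring.mk (H.greedyColor f) fun {v w} hadj => ?_,
      fun v => (greedyColor_le_card v).trans_lt (hk v)⟩
  rcases lt_or_gt_of_ne (hf.ne hadj.ne) with hlt | hlt
  · exact (greedyColor_ne_of_adj_of_lt hadj.symm hlt).symm
  · exact greedyColor_ne_of_adj_of_lt hadj hlt

end Greedy

variable {V : Type*} {G : SimpleGraph V}

lemma exists_adj_dist_eq_of_dist_eq_add_one {u v : V} {k : ℕ} (h : G.dist u v = k + 1) :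
    ∃ w, G.Adj w v ∧ G.dist u w = k := by
  have hreach : G.Reachable u v := Reachable.of_dist_ne_zero (by omega)
  obtain ⟨p, hp⟩ := hreach.exists_walk_length_eq_dist
  have hnil : ¬p.Nil := by simp [← Walk.length_eq_zero_iff, hp, h]
  refine ⟨p.penultimate, p.adj_penultimate hnil, ?_⟩
  have hle : G.dist u p.penultimate ≤ k := by
    simpa [Walk.length_dropLast, hp, h] using dist_le p.dropLast
  rcases (p.adj_penultimate hnil).diff_dist_adj (u := u) with h' | h' | h' <;> omega

lemma dist_lt_card [Fintype V] (u v : V) : G.dist u v < Fintype.card V := by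
  have : Nonempty V := ⟨u⟩
  by_cases huv : G.Reachable u v
  · obtain ⟨p, hp, hlen⟩ := huv.exists_path_of_dist
    exact hlen ▸ hp.length_lt
  · simp [dist_eq_zero_of_not_reachable huv, Fintype.card_pos]

variable [Fintype V]

variable (G) in
noncomputable def distSphere (v : V) (k : ℕ) : Finset V := {w | G.dist v w = k}

@[simp]
lemma mem_distSphere {v w : V} {k : ℕ} : w ∈ G.distSphere v k ↔ G.dist v w = k := by
  simp [distSphere]

lemma degree_power_le_sum_card_distSphere (γ : ℕ) (v : V) :
    (G.power γ).degree v ≤ ∑ j ∈ range γ, #(G.distSphere v (j + 1)) := by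
  classical
  rw [← card_neighborFinset_eq_degree]
  refine (card_le_card fun w hw => ?_).trans card_biUnion_le
  obtain ⟨hne, hreach, hle⟩ := (mem_neighborFinset _ _ _).1 hw
  have := hreach.pos_dist_of_ne hne
  exact mem_biUnion.2 ⟨G.dist v w - 1, mem_range.2 (by omega), mem_distSphere.2 (by omega)⟩

variable [DecidableRel G.Adj]

lemma distSphere_one (v : V) : G.distSphere v 1 = G.neighborFinset v := by
  ext w
  simp [dist_eq_one_iff_adj]

lemma card_distSphere_succ_le (v : V) {k : ℕ} (hk : k ≠ 0) :
    #(G.distSphere v (k + 1)) ≤ ∑ w ∈ G.distSphere v k, (G.degree w - 1) := by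
  classical
  have hcover : G.distSphere v (k + 1) ⊆
      (G.distSphere v k).biUnion fun w => G.neighborFinset w ∩ G.distSphere v (k + 1) := by
    intro x hx
    obtain ⟨w, hadj, hw⟩ := exists_adj_dist_eq_of_dist_eq_add_one (mem_distSphere.1 hx)
    exact mem_biUnion.2
      ⟨w, mem_distSphere.2 hw, mem_inter.2 ⟨(mem_neighborFinset _ _ _).2 hadj, hx⟩⟩
  refine (card_le_card hcover).trans (card_biUnion_le.trans (sum_le_sum fun w hw => ?_))
  obtain ⟨p, hadj, hp⟩ := exists_adj_dist_eq_of_dist_eq_add_one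
    (k := k - 1) (by rw [mem_distSphere.1 hw]; omega)
  -- the neighbour `p` of `w` one step closer to `v` is not counted
  have hssub : G.neighborFinset w ∩ G.distSphere v (k + 1) ⊂ G.neighborFinset w :=
    (ssubset_iff_of_subset inter_subset_left).2
      ⟨p, by simpa using hadj.symm, fun h => by simp at h; omega⟩
  have := card_lt_card hssub
  rw [card_neighborFinset_eq_degree] at this
  omega

lemma card_distSphere_add_le {Δ : ℕ} (hΔ : ∀ w, G.degree w ≤ Δ) (v : V) {m : ℕ}
    (hm : m ≠ 0) (j : ℕ) :
    #(G.distSphere v (j + m)) ≤ (Δ - 1) ^ j * #(G.distSphere v m) := by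
  induction j with
  | zero => simp
  | succ j ih =>
    calc #(G.distSphere v (j + 1 + m))
        ≤ ∑ w ∈ G.distSphere v (j + m), (G.degree w - 1) := by
          rw [add_right_comm]; exact card_distSphere_succ_le v (by omega)
      _ ≤ #(G.distSphere v (j + m)) * (Δ - 1) :=
          sum_le_card_nsmul _ _ _ fun w _ => Nat.sub_le_sub_right (hΔ w) 1
      _ ≤ (Δ - 1) ^ (j + 1) * #(G.distSphere v m) := by
          rw [pow_succ]; nlinarith

lemma sum_card_distSphere_le {Δ : ℕ} (hΔ : ∀ w, G.degree w ≤ Δ) (v : V) {m : ℕ}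
    (hm : m ≠ 0) (n : ℕ) : ∑ j ∈ range n, #(G.distSphere v (j + m)) ≤
      #(G.distSphere v m) * ∑ j ∈ range n, (Δ - 1) ^ j := by
  rw [mul_sum]
  exact sum_le_sum fun j _ => (card_distSphere_add_le hΔ v hm j).trans_eq (mul_comm _ _)

lemma degree_power_le {Δ : ℕ} (hΔ : ∀ w, G.degree w ≤ Δ) (γ : ℕ) (v : V) :
    (G.power γ).degree v ≤ G.degree v * ∑ j ∈ range γ, (Δ - 1) ^ j := by
  simpa [distSphere_one] using
    (degree_power_le_sum_card_distSphere γ v).trans (sum_card_distSphere_le hΔ v one_ne_zero γ)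

lemma degree_power_succ_le {Δ : ℕ} (hΔ : ∀ w, G.degree w ≤ Δ) (γ : ℕ) (v : V) :
    (G.power (γ + 1)).degree v ≤
      G.degree v + #(G.distSphere v 2) * ∑ j ∈ range γ, (Δ - 1) ^ j := by
  calc (G.power (γ + 1)).degree v
      ≤ ∑ j ∈ range (γ + 1), #(G.distSphere v (j + 1)) :=
        degree_power_le_sum_card_distSphere (γ + 1) v
    _ = G.degree v + ∑ j ∈ range γ, #(G.distSphere v (j + 2)) := by
        rw [sum_range_succ', zero_add, distSphere_one, card_neighborFinset_eq_degree, add_comm]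
    _ ≤ G.degree v + #(G.distSphere v 2) * ∑ j ∈ range γ, (Δ - 1) ^ j :=
        Nat.add_le_add_left (sum_card_distSphere_le hΔ v two_ne_zero γ) _

lemma card_distSphere_two_lt {Δ : ℕ} (hΔ : ∀ w, G.degree w ≤ Δ) {u v : V}
    (hadj : G.Adj v u) (hu : G.degree u < Δ) : #(G.distSphere v 2) < Δ * (Δ - 1) := by
  have hu_mem : u ∈ G.distSphere v 1 := by simpa [distSphere_one] using hadj
  calc #(G.distSphere v 2)
      ≤ ∑ w ∈ G.distSphere v 1, (G.degree w - 1) := card_distSphere_succ_le v one_ne_zero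
    _ < ∑ w ∈ G.distSphere v 1, (Δ - 1) :=
        sum_lt_sum (fun w _ => Nat.sub_le_sub_right (hΔ w) 1)
          ⟨u, hu_mem, by have := (G.degree_pos_iff_exists_adj u).2 ⟨v, hadj.symm⟩; omega⟩
    _ ≤ Δ * (Δ - 1) := by
        rw [sum_const, distSphere_one, card_neighborFinset_eq_degree, smul_eq_mul]
        exact Nat.mul_le_mul_right _ (hΔ v)

lemma degree_power_add_two_le_of_degree_lt {Δ γ : ℕ} (hΔ : ∀ w, G.degree w ≤ Δ) {u : V}
    (hu : G.degree u < Δ) (h2 : 2 ≤ Δ) (hγ : 2 ≤ γ) :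
    (G.power γ).degree u + 2 ≤ Δ * ∑ j ∈ range γ, (Δ - 1) ^ j := by
  obtain ⟨d, rfl⟩ : ∃ d, Δ = d + 1 := ⟨Δ - 1, by omega⟩
  have h₁ := degree_power_le hΔ γ u
  have h₂ : d + 1 ≤ ∑ j ∈ range γ, d ^ j := by
    calc d + 1 = ∑ j ∈ range 2, d ^ j := by simp
      _ ≤ _ := sum_le_sum_of_subset (range_subset_range.2 hγ)
  have h₃ : G.degree u * ∑ j ∈ range γ, d ^ j ≤ d * ∑ j ∈ range γ, d ^ j :=
    Nat.mul_le_mul_right _ (by omega)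
  simp only [add_tsub_cancel_right] at h₁ ⊢
  rw [add_mul, one_mul]
  omega

lemma degree_power_add_one_le_of_adj {Δ γ : ℕ} (hΔ : ∀ w, G.degree w ≤ Δ) {u v : V}
    (hadj : G.Adj v u) (hu : G.degree u < Δ) (hγ : 1 ≤ γ) :
    (G.power (γ + 1)).degree v + 1 ≤ Δ * ∑ j ∈ range (γ + 1), (Δ - 1) ^ j := by
  obtain ⟨d, rfl⟩ : ∃ d, Δ = d + 1 := ⟨Δ - 1, by omega⟩
  have h₁ := degree_power_succ_le hΔ γ v
  have h₂ := card_distSphere_two_lt hΔ hadj hu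
  have h₃ : 1 ≤ ∑ j ∈ range γ, d ^ j := by
    calc 1 = ∑ j ∈ range 1, d ^ j := by simp
      _ ≤ _ := sum_le_sum_of_subset (range_subset_range.2 hγ)
  simp only [add_tsub_cancel_right] at h₁ h₂ ⊢
  rw [geom_sum_succ]
  nlinarith [hΔ v]

lemma card_power_neighbors_farther_add_two_le {Δ γ : ℕ} (hconn : G.Connected)
    (hΔ : ∀ w, G.degree w ≤ Δ) {u : V} (hu : G.degree u < Δ) (h2 : 2 ≤ Δ) (hγ : 2 ≤ γ)
    (v : V) :
    #{w ∈ (G.power γ).neighborFinset v | G.dist u v ≤ G.dist u w} + 2 ≤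
      Δ * ∑ j ∈ range γ, (Δ - 1) ^ j := by
  set N := (G.power γ).neighborFinset v
  set farther := {w ∈ N | G.dist u v ≤ G.dist u w}
  set closer := {w ∈ N | ¬G.dist u v ≤ G.dist u w}
  have hsplit : #farther + #closer = (G.power γ).degree v :=
    (card_filter_add_card_filter_not _).trans (card_neighborFinset_eq_degree _ _)
  have hcloser : ∀ w, G.dist u w < G.dist u v → G.dist v w ≤ γ → w ∈ closer := by
    intro w hlt hle
    refine mem_filter.2 ⟨(mem_neighborFinset _ _ _).2 ⟨?_, hconn v w, hle⟩, not_le.2 hlt⟩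
    rintro rfl
    omega
  rcases hd : G.dist u v with _ | _ | d
  · obtain rfl := hconn.dist_eq_zero_iff.1 hd
    have := degree_power_add_two_le_of_degree_lt hΔ hu h2 hγ
    omega
  · obtain ⟨γ, rfl⟩ : ∃ γ', γ = γ' + 1 := ⟨γ - 1, by omega⟩
    have hadj : G.Adj u v := dist_eq_one_iff_adj.1 hd
    have := degree_power_add_one_le_of_adj hΔ hadj.symm hu (γ := γ) (by omega)
    have := card_pos.2 ⟨u, hcloser u (by simp [hd]) (by rw [dist_comm, hd]; omega)⟩
    omega
  · classical
    obtain ⟨w₁, hw₁v, hw₁⟩ := exists_adj_dist_eq_of_dist_eq_add_one hd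
    obtain ⟨w₂, hw₂w₁, hw₂⟩ := exists_adj_dist_eq_of_dist_eq_add_one hw₁
    have hv₂ : G.dist v w₂ ≤ 2 := hconn.dist_triangle.trans
      (by rw [dist_eq_one_iff_adj.2 hw₁v.symm, dist_eq_one_iff_adj.2 hw₂w₁.symm])
    have hpair := card_le_card (insert_subset_iff.2 ⟨hcloser w₁ (by omega)
      (by rw [dist_eq_one_iff_adj.2 hw₁v.symm]; omega),
      singleton_subset_iff.2 (hcloser w₂ (by omega) (by omega))⟩)
    rw [card_pair (by rintro rfl; omega)] at hpair
    have := (degree_power_le hΔ γ v).trans (Nat.mul_le_mul_right _ (hΔ v))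
    omega

end SimpleGraph

theorem chromaticNumber_le_of_nonregular_general {V : Type*} [Fintype V]
    (G : SimpleGraph V) [DecidableRel G.Adj] (hconn : G.Connected) (Δ δ γ : ℕ)
    (hΔ : G.maxDegree = Δ) (hδ : G.minDegree = δ) (h3 : 3 ≤ Δ) (hγ : 2 ≤ γ)
    (hnr : δ ≤ Δ - 1) :
    (G.power γ).chromaticNumber ≤
      ((Δ * ((Δ - 1) ^ γ - 1) / (Δ - 2) - 1 : ℕ) : ℕ∞) := by
  have : Nonempty V := hconn.nonempty
  obtain ⟨u, hu⟩ := G.exists_minimal_degree_vertex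
  have hdeg : ∀ w, G.degree w ≤ Δ := hΔ ▸ G.degree_le_maxDegree
  have hu_lt : G.degree u < Δ := by omega
  -- colour the vertices farther from `u` first
  obtain ⟨f, hf_inj, hf⟩ := exists_injective_lt_of_lt fun v => Fintype.card V - G.dist u v
  have hearlier : ∀ v, (G.power γ).earlierNeighborFinset f v ⊆
      {w ∈ (G.power γ).neighborFinset v | G.dist u v ≤ G.dist u w} := by
    intro v w hw
    obtain ⟨hadj, hlt⟩ := SimpleGraph.mem_earlierNeighborFinset.1 hw
    refine mem_filter.2 ⟨(SimpleGraph.mem_neighborFinset _ _ _).2 hadj, not_lt.1 fun h => ?_⟩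
    have := G.dist_lt_card u v
    exact hlt.not_gt (hf _ _ (by omega))
  rw [show Δ - 2 = Δ - 1 - 1 by omega, mul_pow_sub_one_div_eq_mul_geom_sum Δ (by omega)]
  refine SimpleGraph.Colorable.chromaticNumber_le
    (SimpleGraph.colorable_of_card_earlierNeighborFinset_lt hf_inj fun v => ?_)
  have := card_le_card (hearlier v)
  have := G.card_power_neighbors_farther_add_two_le hconn hdeg hu_lt (by omega) hγ v
  omega

/-- If G is not regular (δ ≤ Δ-1), then χ_γ(G) ≤ M-1. -/
theorem chromaticNumber_le_of_nonregular {V : Type*} [Fintype V] [DecidableEq V]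
    (G : SimpleGraph V) [DecidableRel G.Adj] (hconn : G.Connected) (Δ δ γ : ℕ)
    (hΔ : G.maxDegree = Δ) (hδ : G.minDegree = δ) (h3 : 3 ≤ Δ) (hγ : 2 ≤ γ)
    (hnr : δ ≤ Δ - 1) :
    (G.power γ).chromaticNumber ≤
      ((Δ * ((Δ - 1) ^ γ - 1) / (Δ - 2) - 1 : ℕ) : ℕ∞) :=
  chromaticNumber_le_of_nonregular_general G hconn Δ δ γ hΔ hδ h3 hγ hnr
end
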